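/- Let A and B be k-linear Hopf categories with object classes X and Y, and let f be a functor from A to B, i.e., a map f : X → Y together with k-linear maps f_{x,y} : A_{x,y} → B_{f(x),f(y)} which are coalgebra morphisms (Δ(f_{x,y}(h)) = f_{x,y}(h_(1)) ⊗ f_{x,y}(h_(2)) and ε(f_{x,y}(h)) = ε(h)) and which preserve multiplication and units (f_{x,z}(hl) = f_{x,y}(h) f_{y,z}(l) for h ∈ A_{x,y}, l ∈ A_{y,z}, and f_{x,x}(1_x) = 1_{f(x)}). Then f automatically commutes with the antipodes: S^B_{f(x),f(y)}(f_{x,y}(h)) = f_{y,x}(S^A_{x,y}(h)) for all x,y ∈ X and h ∈ A_{x,y}. -/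
import Mathlib


open TensorProduct

theorem hopf_functor_preserves_antipode
    {k : Type*} [CommRing k] {X : Type*}
    (A : X → X → Type*)
    [∀ x y, AddCommGroup (A x y)] [∀ x y, Module k (A x y)]
    (Δ : ∀ x y, A x y →ₗ[k] A x y ⊗[k] A x y)
    (ε : ∀ x y, A x y →ₗ[k] k)
    (mul : ∀ x y z, A x y →ₗ[k] A y z →ₗ[k] A x z)
    (one : ∀ x, A x x)
    (coassoc : ∀ x y (a : A x y),
      (TensorProduct.assoc k (A x y) (A x y) (A x y))
          ((TensorProduct.map (Δ x y) LinearMap.id) (Δ x y a))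
        = (TensorProduct.map LinearMap.id (Δ x y)) (Δ x y a))
    (counit_left : ∀ x y (a : A x y),
      (TensorProduct.lid k (A x y)) ((TensorProduct.map (ε x y) LinearMap.id) (Δ x y a)) = a)
    (counit_right : ∀ x y (a : A x y),
      (TensorProduct.rid k (A x y)) ((TensorProduct.map LinearMap.id (ε x y)) (Δ x y a)) = a)
    (mul_assoc' : ∀ x y z w (a : A x y) (b : A y z) (c : A z w),
      mul x z w (mul x y z a b) c = mul x y w a (mul y z w b c))
    (one_mul' : ∀ x y (a : A x y), mul x x y (one x) a = a)
    (mul_one' : ∀ x y (a : A x y), mul x y y a (one y) = a)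
    (Δ_mul : ∀ x y z (a : A x y) (b : A y z),
      Δ x z (mul x y z a b)
        = (TensorProduct.map (TensorProduct.lift (mul x y z)) (TensorProduct.lift (mul x y z)))
            ((TensorProduct.tensorTensorTensorComm k (A x y) (A x y) (A y z) (A y z))
              ((Δ x y a) ⊗ₜ[k] (Δ y z b))))
    (ε_mul : ∀ x y z (a : A x y) (b : A y z),
      ε x z (mul x y z a b) = ε x y a * ε y z b)
    (Δ_one : ∀ x, Δ x x (one x) = (one x) ⊗ₜ[k] (one x))
    (ε_one : ∀ x, ε x x (one x) = 1)
    (S : ∀ x y, A x y →ₗ[k] A y x)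
    (S_left : ∀ x y (h : A x y),
      (TensorProduct.lift (mul x y x)) ((TensorProduct.map LinearMap.id (S x y)) (Δ x y h))
        = ε x y h • one x)
    (S_right : ∀ x y (h : A x y),
      (TensorProduct.lift (mul y x y)) ((TensorProduct.map (S x y) LinearMap.id) (Δ x y h))
        = ε x y h • one y)
    {Y : Type*}
    (B : Y → Y → Type*)
    [∀ x y, AddCommGroup (B x y)] [∀ x y, Module k (B x y)]
    (Δ' : ∀ x y, B x y →ₗ[k] B x y ⊗[k] B x y)
    (ε' : ∀ x y, B x y →ₗ[k] k)
    (mul' : ∀ x y z, B x y →ₗ[k] B y z →ₗ[k] B x z)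
    (one' : ∀ x, B x x)
    (coassocB : ∀ x y (a : B x y),
      (TensorProduct.assoc k (B x y) (B x y) (B x y))
          ((TensorProduct.map (Δ' x y) LinearMap.id) (Δ' x y a))
        = (TensorProduct.map LinearMap.id (Δ' x y)) (Δ' x y a))
    (counit_leftB : ∀ x y (a : B x y),
      (TensorProduct.lid k (B x y)) ((TensorProduct.map (ε' x y) LinearMap.id) (Δ' x y a)) = a)
    (counit_rightB : ∀ x y (a : B x y),
      (TensorProduct.rid k (B x y)) ((TensorProduct.map LinearMap.id (ε' x y)) (Δ' x y a)) = a)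
    (mul_assocB : ∀ x y z w (a : B x y) (b : B y z) (c : B z w),
      mul' x z w (mul' x y z a b) c = mul' x y w a (mul' y z w b c))
    (one_mulB : ∀ x y (a : B x y), mul' x x y (one' x) a = a)
    (mul_oneB : ∀ x y (a : B x y), mul' x y y a (one' y) = a)
    (Δ'_mul' : ∀ x y z (a : B x y) (b : B y z),
      Δ' x z (mul' x y z a b)
        = (TensorProduct.map (TensorProduct.lift (mul' x y z)) (TensorProduct.lift (mul' x y z)))
            ((TensorProduct.tensorTensorTensorComm k (B x y) (B x y) (B y z) (B y z))
              ((Δ' x y a) ⊗ₜ[k] (Δ' y z b))))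
    (ε'_mul' : ∀ x y z (a : B x y) (b : B y z),
      ε' x z (mul' x y z a b) = ε' x y a * ε' y z b)
    (Δ'_one' : ∀ x, Δ' x x (one' x) = (one' x) ⊗ₜ[k] (one' x))
    (ε'_one' : ∀ x, ε' x x (one' x) = 1)
    (T : ∀ x y, B x y →ₗ[k] B y x)
    (T_left : ∀ x y (h : B x y),
      (TensorProduct.lift (mul' x y x)) ((TensorProduct.map LinearMap.id (T x y)) (Δ' x y h))
        = ε' x y h • one' x)
    (T_right : ∀ x y (h : B x y),
      (TensorProduct.lift (mul' y x y)) ((TensorProduct.map (T x y) LinearMap.id) (Δ' x y h))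
        = ε' x y h • one' y)
    (f : X → Y)
    (F : ∀ x y, A x y →ₗ[k] B (f x) (f y))
    (F_comul : ∀ x y (h : A x y),
      Δ' (f x) (f y) (F x y h) = (TensorProduct.map (F x y) (F x y)) (Δ x y h))
    (F_counit : ∀ x y (h : A x y), ε' (f x) (f y) (F x y h) = ε x y h)
    (F_mul : ∀ x y z (h : A x y) (l : A y z),
      F x z (mul x y z h l) = mul' (f x) (f y) (f z) (F x y h) (F y z l))
    (F_one : ∀ x, F x x (one x) = one' (f x)) :
    ∀ x y (h : A x y), T (f x) (f y) (F x y h) = F y x (S x y h) := by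

  intro x y h
  set g1 : A x y →ₗ[k] B (f y) (f x) := (T (f x) (f y)) ∘ₗ (F x y) with hg1
  set g2 : A x y →ₗ[k] B (f x) (f y) := F x y with hg2
  set g3 : A x y →ₗ[k] B (f y) (f x) := (F y x) ∘ₗ (S x y) with hg3
  -- conv (T∘F) F = unit at f y
  have convL : (TensorProduct.lift (mul' (f y) (f x) (f y))) ∘ₗ
      (TensorProduct.map g1 g2) ∘ₗ (Δ x y)
      = (ε x y).smulRight (one' (f y)) := by
    apply LinearMap.ext; intro a
    have e0 : TensorProduct.map g1 g2
        = (TensorProduct.map (T (f x) (f y)) LinearMap.id) ∘ₗ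
          (TensorProduct.map (F x y) (F x y)) := by
      rw [← TensorProduct.map_comp]; rfl
    simp only [LinearMap.comp_apply, LinearMap.smulRight_apply, e0]
    rw [← F_comul, T_right, F_counit]
  -- conv F (F∘S) = unit at f x
  have convR : (TensorProduct.lift (mul' (f x) (f y) (f x))) ∘ₗ
      (TensorProduct.map g2 g3) ∘ₗ (Δ x y)
      = (ε x y).smulRight (one' (f x)) := by
    apply LinearMap.ext; intro a
    have e1 : (TensorProduct.lift (mul' (f x) (f y) (f x))) ∘ₗ
        (TensorProduct.map g2 g3)
        = (F x x) ∘ₗ (TensorProduct.lift (mul x y x)) ∘ₗ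
          (TensorProduct.map LinearMap.id (S x y)) := by
      apply TensorProduct.ext'
      intro a b
      simp [hg2, hg3, F_mul]
    simp only [LinearMap.comp_apply, LinearMap.smulRight_apply]
    rw [← LinearMap.comp_apply, e1]
    simp only [LinearMap.comp_apply]
    rw [S_left, map_smul, F_one]
  -- right unit law : conv g1 e = g1
  have stepA : TensorProduct.lift (mul' (f y) (f x) (f x))
      ((TensorProduct.map g1 ((ε x y).smulRight (one' (f x)))) (Δ x y h))
      = T (f x) (f y) (F x y h) := by
    have e1 : TensorProduct.lift (mul' (f y) (f x) (f x)) ∘ₗ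
        TensorProduct.map g1 ((ε x y).smulRight (one' (f x)))
        = g1 ∘ₗ (TensorProduct.rid k (A x y)).toLinearMap ∘ₗ
          TensorProduct.map LinearMap.id (ε x y) := by
      apply TensorProduct.ext'; intro a b
      simp [mul_oneB]
    rw [← LinearMap.comp_apply, e1]
    simp only [LinearMap.comp_apply, LinearEquiv.coe_coe]
    rw [counit_right]
    rfl
  -- left unit law : conv e g3 = g3
  have stepE : TensorProduct.lift (mul' (f y) (f y) (f x))
      ((TensorProduct.map ((ε x y).smulRight (one' (f y))) g3) (Δ x y h))
      = F y x (S x y h) := by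
    have e1 : TensorProduct.lift (mul' (f y) (f y) (f x)) ∘ₗ
        TensorProduct.map ((ε x y).smulRight (one' (f y))) g3
        = g3 ∘ₗ (TensorProduct.lid k (A x y)).toLinearMap ∘ₗ
          TensorProduct.map (ε x y) LinearMap.id := by
      apply TensorProduct.ext'; intro a b
      simp [one_mulB]
    rw [← LinearMap.comp_apply, e1]
    simp only [LinearMap.comp_apply, LinearEquiv.coe_coe]
    rw [counit_left]
    rfl
  -- associativity of convolution at h
  have assocStep : TensorProduct.lift (mul' (f y) (f x) (f x))
      ((TensorProduct.map g1
        ((TensorProduct.lift (mul' (f x) (f y) (f x))) ∘ₗ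
          (TensorProduct.map g2 g3) ∘ₗ (Δ x y))) (Δ x y h))
      = TensorProduct.lift (mul' (f y) (f y) (f x))
      ((TensorProduct.map
        ((TensorProduct.lift (mul' (f y) (f x) (f y))) ∘ₗ
          (TensorProduct.map g1 g2) ∘ₗ (Δ x y)) g3) (Δ x y h)) := by
    have eL : TensorProduct.map g1
        ((TensorProduct.lift (mul' (f x) (f y) (f x))) ∘ₗ
          (TensorProduct.map g2 g3) ∘ₗ (Δ x y))
        = (TensorProduct.map g1
            ((TensorProduct.lift (mul' (f x) (f y) (f x))) ∘ₗ
              (TensorProduct.map g2 g3))) ∘ₗ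
          (TensorProduct.map LinearMap.id (Δ x y)) := by
      rw [← TensorProduct.map_comp]; rfl
    have eR : TensorProduct.map
        ((TensorProduct.lift (mul' (f y) (f x) (f y))) ∘ₗ
          (TensorProduct.map g1 g2) ∘ₗ (Δ x y)) g3
        = (TensorProduct.map
            ((TensorProduct.lift (mul' (f y) (f x) (f y))) ∘ₗ
              (TensorProduct.map g1 g2)) g3) ∘ₗ
          (TensorProduct.map (Δ x y) LinearMap.id) := by
      rw [← TensorProduct.map_comp]; rfl
    rw [eL, eR]
    simp only [LinearMap.comp_apply]
    rw [← coassoc x y h]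
    set u := (TensorProduct.map (Δ x y) LinearMap.id) (Δ x y h) with hu
    have key : (TensorProduct.lift (mul' (f y) (f x) (f x))) ∘ₗ
        (TensorProduct.map g1
          ((TensorProduct.lift (mul' (f x) (f y) (f x))) ∘ₗ
            (TensorProduct.map g2 g3))) ∘ₗ
        (TensorProduct.assoc k (A x y) (A x y) (A x y)).toLinearMap
        = (TensorProduct.lift (mul' (f y) (f y) (f x))) ∘ₗ
          (TensorProduct.map
            ((TensorProduct.lift (mul' (f y) (f x) (f y))) ∘ₗ
              (TensorProduct.map g1 g2)) g3) := by
      apply TensorProduct.ext_threefold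
      intro a b c
      simp [mul_assocB]
    have := congrArg (fun φ : (A x y ⊗[k] A x y) ⊗[k] A x y →ₗ[k] B (f y) (f x) => φ u) key
    simpa using this
  -- chain everything together
  calc T (f x) (f y) (F x y h)
      = TensorProduct.lift (mul' (f y) (f x) (f x))
          ((TensorProduct.map g1 ((ε x y).smulRight (one' (f x)))) (Δ x y h)) := stepA.symm
    _ = TensorProduct.lift (mul' (f y) (f x) (f x))
          ((TensorProduct.map g1
            ((TensorProduct.lift (mul' (f x) (f y) (f x))) ∘ₗ
              (TensorProduct.map g2 g3) ∘ₗ (Δ x y))) (Δ x y h)) := by rw [convR]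
    _ = TensorProduct.lift (mul' (f y) (f y) (f x))
          ((TensorProduct.map
            ((TensorProduct.lift (mul' (f y) (f x) (f y))) ∘ₗ
              (TensorProduct.map g1 g2) ∘ₗ (Δ x y)) g3) (Δ x y h)) := assocStep
    _ = TensorProduct.lift (mul' (f y) (f y) (f x))
          ((TensorProduct.map ((ε x y).smulRight (one' (f y))) g3) (Δ x y h)) := by rw [convL]
    _ = F y x (S x y h) := stepE
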